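/- arXiv:1103.4464 — 4 statements merged into one kernel-verified Lean document; each statement's English description precedes it below -/
import Mathlib

section
/- For Baker's bivariate distribution H_+^{(n)}(x,y) = (1/n) Σ_{k=1}^n F_X^{k:n}(x) F_Y^{k:n}(y) with standard exponential marginals F_X(x) = F_Y(x) = 1 - e^{-x} (x > 0), the Pearson correlation coefficient equals ρ_n = 1 - (1/n) Σ_{k=1}^n 1/k. -/
/-! Because `∑ₖ F^{k:n} = n F` (the binomial mean), `H - F ⊗ F = (1/n) ∑ₖ gₖ ⊗ gₖ` with
`gₖ = F^{k:n} - F`, so by Fubini the covariance is `(1/n) ∑ₖ (∫ gₖ)²`. Each `∫₀^∞ gₖ` is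
`E X - E X_{k:n} = 1 - (h_n - h_{n-k})`, the order-statistic mean coming from the Beta integrals
`∫₀^∞ (1 - e^{-x})^i e^{-(m+1)x} dx = i! m! / (i+m+1)!`, and the harmonic-number identity
`∑_{m<n} (1 - h_n + h_m)² = n - h_n` finishes the computation. -/

open MeasureTheory

/-- The c.d.f. of the `k`-th order statistic of `n` i.i.d. samples with c.d.f. value `p`. -/
def ordStatCDF (n k : ℕ) (p : ℝ) : ℝ :=
  ∑ i ∈ Finset.Icc k n, (n.choose i : ℝ) * p ^ i * (1 - p) ^ (n - i)

open Real Finset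
open Set (Ioi)
open scoped Nat

theorem Finset.sum_Icc_one_sum_Icc_eq_sum_range_nsmul {M : Type*} [AddCommMonoid M] (n : ℕ)
    (a : ℕ → M) :
    ∑ k ∈ Icc 1 n, ∑ i ∈ Icc k n, a i = ∑ i ∈ range (n + 1), i • a i := by
  rw [Finset.sum_comm' (t' := range (n + 1)) (s' := fun i => Icc 1 i)]
  · simp
  · intro k i
    simp only [mem_Icc, mem_range]
    omega

theorem sum_ordStatCDF (n : ℕ) (p : ℝ) : ∑ k ∈ Icc 1 n, ordStatCDF n k p = n * p := by
  have hmean := congrArg (Polynomial.eval p) (bernsteinPolynomial.sum_smul ℝ n)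
  simp only [Polynomial.eval_finsetSum, bernsteinPolynomial, Polynomial.eval_mul,
    Polynomial.eval_pow, Polynomial.eval_sub, Polynomial.eval_one, Polynomial.eval_X,
    Polynomial.eval_natCast, nsmul_eq_mul] at hmean
  rw [← hmean]
  simp only [ordStatCDF, Finset.sum_Icc_one_sum_Icc_eq_sum_range_nsmul, nsmul_eq_mul]

theorem one_sub_ordStatCDF {n k : ℕ} (hk : k ≤ n) (p : ℝ) :
    1 - ordStatCDF n k p = ∑ i ∈ range k, (n.choose i : ℝ) * p ^ i * (1 - p) ^ (n - i) := by
  set b : ℕ → ℝ := fun i => (n.choose i : ℝ) * p ^ i * (1 - p) ^ (n - i)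
  have hbinom : ∑ i ∈ range (n + 1), b i = 1 := by
    have hadd := add_pow p (1 - p) n
    rw [add_sub_cancel, one_pow] at hadd
    rw [hadd]
    exact sum_congr rfl fun i _ => by ring
  have hsplit := sum_range_add_sum_Ico b (by omega : k ≤ n + 1)
  rw [Finset.Ico_add_one_right_eq_Icc] at hsplit
  rw [ordStatCDF]
  linarith

theorem sum_ordStatCDF_sub_mul_ordStatCDF_sub (n : ℕ) (p q : ℝ) :
    ∑ k ∈ Icc 1 n, (ordStatCDF n k p - p) * (ordStatCDF n k q - q) =
      ∑ k ∈ Icc 1 n, ordStatCDF n k p * ordStatCDF n k q - n * p * q := by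
  have hp := sum_ordStatCDF n p
  have hq := sum_ordStatCDF n q
  simp only [sub_mul, mul_sub, sum_sub_distrib, ← sum_mul, ← mul_sum, hp, hq, sum_const,
    Nat.card_Icc, nsmul_eq_mul]
  push_cast
  ring

theorem sum_range_harmonic_sub (n : ℕ) : ∑ m ∈ range n, (harmonic n - harmonic m) = n := by
  induction n with
  | zero => simp
  | succ n ih =>
    simp_rw [sum_range_succ, harmonic_succ, add_sub_right_comm, sum_add_distrib, ih, sum_const,
      card_range, nsmul_eq_mul]
    push_cast
    field_simp
    ring

theorem sum_range_sq_harmonic_sub (n : ℕ) :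
    ∑ m ∈ range n, (harmonic n - harmonic m) ^ 2 = 2 * n - harmonic n := by
  induction n with
  | zero => simp
  | succ n ih =>
    simp_rw [sum_range_succ, harmonic_succ, add_sub_right_comm, add_sq, sum_add_distrib,
      ← sum_mul, ← mul_sum, ih, sum_range_harmonic_sub, sum_const, card_range, nsmul_eq_mul]
    push_cast
    field_simp
    ring

theorem sum_Icc_sq_one_sub_harmonic_sub (n : ℕ) :
    ∑ k ∈ Icc 1 n, (1 - (harmonic n - harmonic (n - k))) ^ 2 = n - harmonic n := by
  have hreflect : ∑ k ∈ Icc 1 n, (1 - (harmonic n - harmonic (n - k))) ^ 2 =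
      ∑ m ∈ range n, (1 - (harmonic n - harmonic m)) ^ 2 := by
    refine sum_nbij' (fun k => n - k) (fun m => n - m) ?_ ?_ ?_ ?_ fun _ _ => rfl <;>
      intro a ha <;> simp only [mem_Icc, mem_range] at ha ⊢ <;> omega
  calc ∑ k ∈ Icc 1 n, (1 - (harmonic n - harmonic (n - k))) ^ 2
      = ∑ m ∈ range n, ((harmonic n - harmonic m) ^ 2 - 2 * (harmonic n - harmonic m) + 1) := by
        rw [hreflect]
        exact sum_congr rfl fun _ _ => by ring
    _ = (2 * n - harmonic n) - 2 * n + n := by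
        rw [sum_add_distrib, sum_sub_distrib, ← mul_sum, sum_range_sq_harmonic_sub,
          sum_range_harmonic_sub, sum_const, card_range, nsmul_one]
    _ = n - harmonic n := by ring

theorem sum_range_inv_sub_eq_harmonic_sub {n k : ℕ} (hk : k ≤ n) :
    ∑ i ∈ range k, ((n - i : ℕ) : ℚ)⁻¹ = harmonic n - harmonic (n - k) := by
  induction k with
  | zero => simp
  | succ k ih =>
    obtain ⟨m, hm⟩ : ∃ m, n - k = m + 1 := ⟨n - k - 1, by omega⟩
    rw [sum_range_succ, ih (by omega), hm, harmonic_succ, show n - (k + 1) = m by omega]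
    ring

theorem integrableOn_one_sub_exp_neg_pow_mul_exp_neg_pow (i : ℕ) {m : ℕ} (hm : m ≠ 0) :
    IntegrableOn (fun x => (1 - exp (-x)) ^ i * exp (-x) ^ m) (Ioi 0) := by
  refine Integrable.mono' (integrableOn_exp_neg_Ioi 0) (by fun_prop) ?_
  filter_upwards [ae_restrict_mem measurableSet_Ioi] with x hx
  have he : exp (-x) ≤ 1 := exp_le_one_iff.mpr (by linarith [Set.mem_Ioi.mp hx])
  have h0 : 0 ≤ 1 - exp (-x) := by linarith
  rw [norm_of_nonneg (by positivity)]
  calc (1 - exp (-x)) ^ i * exp (-x) ^ m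
      ≤ 1 * exp (-x) ^ 1 :=
        mul_le_mul (pow_le_one₀ h0 (by linarith [exp_pos (-x)]))
          (pow_le_pow_of_le_one (exp_pos _).le he (by omega)) (by positivity) zero_le_one
    _ = exp (-x) := by ring

theorem integral_exp_neg_pow_succ (m : ℕ) :
    ∫ x in Ioi (0 : ℝ), exp (-x) ^ (m + 1) = 1 / (m + 1) := by
  have hm : (0 : ℝ) < m + 1 := by positivity
  simp_rw [← exp_nat_mul, mul_neg, Nat.cast_succ]
  rw [integral_comp_mul_left_Ioi (fun y => exp (-y)) 0 hm, mul_zero, integral_exp_neg_Ioi_zero,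
    smul_eq_mul, mul_one, one_div]

theorem integral_one_sub_exp_neg_pow_mul_exp_neg_pow_succ (i m : ℕ) :
    ∫ x in Ioi (0 : ℝ), (1 - exp (-x)) ^ i * exp (-x) ^ (m + 1) = i ! * m ! / (i + m + 1)! := by
  induction i generalizing m with
  | zero =>
    simp only [pow_zero, one_mul, integral_exp_neg_pow_succ, zero_add, Nat.factorial_succ]
    push_cast [Nat.factorial_zero]
    field_simp
  | succ i ih =>
    have hsplit : ∀ x : ℝ, (1 - exp (-x)) ^ (i + 1) * exp (-x) ^ (m + 1) =
        (1 - exp (-x)) ^ i * exp (-x) ^ (m + 1) - (1 - exp (-x)) ^ i * exp (-x) ^ (m + 1 + 1) :=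
      fun x => by ring
    simp_rw [hsplit]
    rw [integral_sub (integrableOn_one_sub_exp_neg_pow_mul_exp_neg_pow i m.succ_ne_zero)
      (integrableOn_one_sub_exp_neg_pow_mul_exp_neg_pow i (m + 1).succ_ne_zero), ih, ih,
      show i + (m + 1) + 1 = i + m + 1 + 1 by ring, show i + 1 + m + 1 = i + m + 1 + 1 by ring]
    push_cast [Nat.factorial_succ]
    field_simp
    ring

theorem choose_mul_integral_one_sub_exp_neg_pow_mul_exp_neg_pow {n i : ℕ} (hi : i < n) :
    ∫ x in Ioi (0 : ℝ), (n.choose i : ℝ) * (1 - exp (-x)) ^ i * exp (-x) ^ (n - i) =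
      1 / (n - i : ℕ) := by
  obtain ⟨m, rfl⟩ : ∃ m, n = i + m + 1 := ⟨n - i - 1, by omega⟩
  simp_rw [mul_assoc, integral_const_mul, show i + m + 1 - i = m + 1 by omega,
    integral_one_sub_exp_neg_pow_mul_exp_neg_pow_succ,
    Nat.cast_choose ℝ (by omega : i ≤ i + m + 1), show i + m + 1 - i = m + 1 by omega,
    Nat.factorial_succ m]
  push_cast
  field_simp

theorem integrableOn_one_sub_ordStatCDF {n k : ℕ} (hk : k ≤ n) :
    IntegrableOn (fun x => 1 - ordStatCDF n k (1 - exp (-x))) (Ioi 0) := by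
  simp_rw [one_sub_ordStatCDF hk, sub_sub_cancel, mul_assoc]
  exact integrable_finsetSum _ fun i hi =>
    (integrableOn_one_sub_exp_neg_pow_mul_exp_neg_pow i (by grind)).const_mul _

theorem integral_one_sub_ordStatCDF {n k : ℕ} (hk : k ≤ n) :
    ∫ x in Ioi (0 : ℝ), (1 - ordStatCDF n k (1 - exp (-x))) =
      (harmonic n - harmonic (n - k) : ℚ) := by
  simp_rw [one_sub_ordStatCDF hk, sub_sub_cancel]
  rw [integral_finsetSum _ fun i hi => ?_]
  · rw [sum_congr rfl fun i hi =>
      choose_mul_integral_one_sub_exp_neg_pow_mul_exp_neg_pow ((mem_range.mp hi).trans_le hk),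
      ← sum_range_inv_sub_eq_harmonic_sub hk]
    push_cast
    simp only [one_div]
  · simp_rw [mul_assoc]
    exact (integrableOn_one_sub_exp_neg_pow_mul_exp_neg_pow i (by grind)).const_mul _

theorem integrableOn_ordStatCDF_sub {n k : ℕ} (hk : k ≤ n) :
    IntegrableOn (fun x => ordStatCDF n k (1 - exp (-x)) - (1 - exp (-x))) (Ioi 0) := by
  refine ((integrableOn_exp_neg_Ioi 0).sub (integrableOn_one_sub_ordStatCDF hk)).congr_fun
    (fun x _ => ?_) measurableSet_Ioi
  simp only [Pi.sub_apply]
  ring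

theorem integral_ordStatCDF_sub {n k : ℕ} (hk : k ≤ n) :
    ∫ x in Ioi (0 : ℝ), (ordStatCDF n k (1 - exp (-x)) - (1 - exp (-x))) =
      (1 - (harmonic n - harmonic (n - k)) : ℚ) := by
  have hsplit : ∀ x : ℝ, ordStatCDF n k (1 - exp (-x)) - (1 - exp (-x)) =
      exp (-x) - (1 - ordStatCDF n k (1 - exp (-x))) := fun x => by ring
  rw [setIntegral_congr_fun measurableSet_Ioi fun x _ => hsplit x,
    integral_sub (integrableOn_exp_neg_Ioi 0) (integrableOn_one_sub_ordStatCDF hk),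
    integral_exp_neg_Ioi_zero, integral_one_sub_ordStatCDF hk]
  push_cast
  ring

theorem setIntegral_prod_sum_mul {α β ι : Type*} [MeasurableSpace α] [MeasurableSpace β]
    {μ : Measure α} {ν : Measure β} [SFinite μ] [SFinite ν] (s : Finset ι) {f : ι → α → ℝ}
    {g : ι → β → ℝ} {A : Set α} {B : Set β} (hf : ∀ i ∈ s, IntegrableOn (f i) A μ)
    (hg : ∀ i ∈ s, IntegrableOn (g i) B ν) :
    ∫ z in A ×ˢ B, ∑ i ∈ s, f i z.1 * g i z.2 ∂μ.prod ν =
      ∑ i ∈ s, (∫ x in A, f i x ∂μ) * ∫ y in B, g i y ∂ν := by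
  rw [← Measure.prod_restrict, integral_finsetSum _ fun i hi => (hf i hi).mul_prod (hg i hi)]
  exact sum_congr rfl fun i _ => integral_prod_mul (f i) (g i)

/-- Hoeffding's formula writes the covariance as `∫∫ (H(x,y) - F(x)F(y)) dx dy`, and
`E X = Var X = 1` for the standard exponential. -/
theorem baker_exponential_correlation (n : ℕ) (hn : 1 ≤ n)
    (F : ℝ → ℝ) (hF : ∀ x, F x = 1 - Real.exp (-x))
    (H : ℝ → ℝ → ℝ)
    (hH : ∀ x y, H x y = (1 / n : ℝ) * ∑ k ∈ Finset.Icc 1 n,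
      ordStatCDF n k (F x) * ordStatCDF n k (F y)) :
    (∫ p in Set.Ioi (0:ℝ) ×ˢ Set.Ioi (0:ℝ), (H p.1 p.2 - F p.1 * F p.2)) / Real.sqrt (1 * 1) =
      1 - (1 / n : ℝ) * ∑ k ∈ Finset.Icc 1 n, (1 / k : ℝ) := by
  have hn0 : (n : ℝ) ≠ 0 := Nat.cast_ne_zero.mpr (by omega)
  set g : ℕ → ℝ → ℝ := fun k x => ordStatCDF n k (1 - exp (-x)) - (1 - exp (-x))
  have hintegrand : ∀ p : ℝ × ℝ,
      H p.1 p.2 - F p.1 * F p.2 = 1 / n * ∑ k ∈ Icc 1 n, g k p.1 * g k p.2 := fun p => by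
    rw [hH, hF, hF, sum_ordStatCDF_sub_mul_ordStatCDF_sub]
    field_simp
  have hg : ∀ k ∈ Icc 1 n, IntegrableOn (g k) (Ioi 0) := fun k hk =>
    integrableOn_ordStatCDF_sub (mem_Icc.mp hk).2
  have hsum := congrArg (Rat.cast : ℚ → ℝ) (sum_Icc_sq_one_sub_harmonic_sub n)
  push_cast at hsum
  simp_rw [hintegrand]
  rw [integral_const_mul, Measure.volume_eq_prod, setIntegral_prod_sum_mul _ hg hg,
    sum_congr rfl fun k hk => by rw [← sq, integral_ordStatCDF_sub (mem_Icc.mp hk).2]]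
  push_cast
  rw [hsum, mul_one, sqrt_one, div_one, harmonic_eq_sum_Icc]
  push_cast
  field_simp
end

section
/- For each fixed (t,s) ∈ [0,1]², lim_{n→∞} t·s·[1 + α(1 - t^{1/n})(1 - s^{1/n})]^n = t·s; that is, the copula of the maxima of an FGM sample converges pointwise to the independence copula Π(t,s) = ts. -/
/-! Write the bracket as `1 + u n`. Since `n (1 - t^{1/n})` is minus a difference quotient of
`x ↦ t^x` at `0`, it tends to `-log t`, while `1 - s^{1/n} → 0`; hence `n · u n → 0` and
`(1 + u n)^n → exp 0 = 1`. When `t = 0` or `s = 0` the sequence vanishes identically. -/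

open Filter Topology

lemma tendsto_natCast_mul_one_sub_rpow_one_div {a : ℝ} (ha : 0 < a) :
    Tendsto (fun n : ℕ => (n : ℝ) * (1 - a ^ ((1 : ℝ) / n))) atTop (𝓝 (-Real.log a)) := by
  have hslope := (Real.hasStrictDerivAt_const_rpow ha 0).hasDerivAt.tendsto_slope_zero_right
  simp only [zero_add, Real.rpow_zero, one_mul, smul_eq_mul] at hslope
  have hinv := tendsto_inv_atTop_nhdsGT_zero.comp (tendsto_natCast_atTop_atTop (R := ℝ))
  refine (hslope.comp hinv).neg.congr fun n => ?_
  simp only [Function.comp_apply, one_div, inv_inv]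
  ring

lemma tendsto_rpow_one_div_nhds_one {a : ℝ} (ha : 0 < a) :
    Tendsto (fun n : ℕ => a ^ ((1 : ℝ) / n)) atTop (𝓝 1) := by
  simpa [Function.comp_def] using
    (Real.continuousAt_const_rpow ha.ne').tendsto.comp tendsto_one_div_atTop_nhds_zero_nat

theorem FGM_maxima_copula_tendsto_indep_general (α : ℝ)
    (t s : ℝ) (ht : t ∈ Set.Icc (0:ℝ) 1) (hs : s ∈ Set.Icc (0:ℝ) 1) :
    Tendsto (fun n : ℕ =>
        t * s * (1 + α * (1 - t ^ ((1 : ℝ) / n)) * (1 - s ^ ((1 : ℝ) / n))) ^ n)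
      atTop (nhds (t * s)) := by
  rcases ht.1.eq_or_lt with rfl | ht0
  · simp
  rcases hs.1.eq_or_lt with rfl | hs0
  · simp
  have hlin : Tendsto (fun n : ℕ =>
      (n : ℝ) * (α * (1 - t ^ ((1 : ℝ) / n)) * (1 - s ^ ((1 : ℝ) / n)))) atTop (𝓝 0) := by
    have := ((tendsto_natCast_mul_one_sub_rpow_one_div ht0).const_mul α).mul
      ((tendsto_rpow_one_div_nhds_one hs0).const_sub 1)
    simp only [sub_self, mul_zero] at this
    exact this.congr fun n => by ring
  simpa using (Real.tendsto_one_add_pow_exp_of_tendsto hlin).const_mul (t * s)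

/-- For each fixed `(t,s) ∈ [0,1]²` and `-1 ≤ α ≤ 1`,
`lim_{n→∞} t·s·[1 + α(1 - t^{1/n})(1 - s^{1/n})]^n = t·s`: the copula of the maxima of an
FGM sample converges pointwise to the independence copula `Π(t,s) = ts`. -/
theorem FGM_maxima_copula_tendsto_indep (α : ℝ) (hα : α ∈ Set.Icc (-1 : ℝ) 1)
    (t s : ℝ) (ht : t ∈ Set.Icc (0:ℝ) 1) (hs : s ∈ Set.Icc (0:ℝ) 1) :
    Tendsto (fun n : ℕ =>
        t * s * (1 + α * (1 - t ^ ((1 : ℝ) / n)) * (1 - s ^ ((1 : ℝ) / n))) ^ n)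
      atTop (nhds (t * s)) :=
  FGM_maxima_copula_tendsto_indep_general α t s ht hs
end

section
/- If the underlying copula is the Gumbel logistic copula C(u,v) = uv/(u + v - uv), then the copula of the componentwise maxima of an i.i.d. sample of size n is C_{n:n}(t,s) = ts / (t^{1/n} + s^{1/n} - t^{1/n}s^{1/n})^n, and for each fixed (t,s) ∈ (0,1]², lim_{n→∞} C_{n:n}(t,s) = ts. -/
open Filter

/-!
With `a = t^{1/n}` and `b = s^{1/n}` one has `(ab)^n = ts`, which gives the closed form. For the
limit write the denominator as `a + b - ab = 1 - (1 - a)(1 - b)`. Since `1 + y log t ≤ t^y`, both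
`1 - a` and `1 - b` are `O(1/n)`, so `x_n = (1 - a)(1 - b)` satisfies `n x_n → 0`, and by
Bernoulli's inequality `1 - n x_n ≤ (1 - x_n)^n ≤ 1`, so the denominator tends to `1`.
-/

open Topology

namespace Real

lemma rpow_one_div_natCast_pow {t : ℝ} (ht : 0 ≤ t) {n : ℕ} (hn : n ≠ 0) :
    (t ^ ((1 : ℝ) / n)) ^ n = t := by
  rw [one_div]
  exact rpow_inv_natCast_pow ht hn

lemma one_add_mul_log_le_rpow {t : ℝ} (ht : 0 < t) (y : ℝ) : 1 + y * log t ≤ t ^ y := by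
  rw [rpow_def_of_pos ht, mul_comm y]
  linarith [add_one_le_exp (log t * y)]

lemma one_sub_rpow_one_div_le {t : ℝ} (ht : 0 < t) (n : ℕ) :
    1 - t ^ ((1 : ℝ) / n) ≤ -log t / n := by
  have := one_add_mul_log_le_rpow ht ((1 : ℝ) / n)
  rw [one_div_mul_eq_div] at this
  rw [neg_div]
  linarith

lemma rpow_one_div_mem_Ioc {t : ℝ} (ht : t ∈ Set.Ioc (0 : ℝ) 1) (n : ℕ) :
    t ^ ((1 : ℝ) / n) ∈ Set.Ioc (0 : ℝ) 1 :=
  ⟨rpow_pos_of_pos ht.1 _, rpow_le_one ht.1.le ht.2 (by positivity)⟩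

end Real

open Real

lemma tendsto_one_sub_pow_of_tendsto_natCast_mul {x : ℕ → ℝ} (h0 : ∀ n, 0 ≤ x n)
    (h1 : ∀ n, x n ≤ 1) (hx : Tendsto (fun n : ℕ => n * x n) atTop (𝓝 0)) :
    Tendsto (fun n : ℕ => (1 - x n) ^ n) atTop (𝓝 1) := by
  have hlow : Tendsto (fun n : ℕ => 1 - n * x n) atTop (𝓝 1) := by
    simpa using tendsto_const_nhds.sub hx
  refine tendsto_of_tendsto_of_tendsto_of_le_of_le hlow tendsto_const_nhds (fun n => ?_)
    (fun n => pow_le_one₀ (by linarith [h1 n]) (by linarith [h0 n]))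
  calc 1 - n * x n = 1 + n * ((1 - x n) - 1) := by ring
    _ ≤ (1 - x n) ^ n := one_add_mul_sub_le_pow (by linarith [h1 n]) n

lemma tendsto_natCast_mul_one_sub_rpow_mul_one_sub_rpow {t s : ℝ} (ht : t ∈ Set.Ioc (0 : ℝ) 1)
    (hs : s ∈ Set.Ioc (0 : ℝ) 1) :
    Tendsto (fun n : ℕ => n * ((1 - t ^ ((1 : ℝ) / n)) * (1 - s ^ ((1 : ℝ) / n))))
      atTop (𝓝 0) := by
  have hbound : Tendsto (fun n : ℕ => log t * log s / n) atTop (𝓝 0) :=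
    tendsto_const_nhds.div_atTop tendsto_natCast_atTop_atTop
  refine tendsto_of_tendsto_of_tendsto_of_le_of_le' tendsto_const_nhds hbound
    (Eventually.of_forall fun n => ?_) ?_
  · have := (rpow_one_div_mem_Ioc ht n).2
    have := (rpow_one_div_mem_Ioc hs n).2
    positivity
  filter_upwards [eventually_ne_atTop 0] with n hn
  have hn' : (0 : ℝ) < n := by positivity
  calc (n : ℝ) * ((1 - t ^ ((1 : ℝ) / n)) * (1 - s ^ ((1 : ℝ) / n)))
      ≤ n * ((-log t / n) * (-log s / n)) := by
        gcongr
        · linarith [(rpow_one_div_mem_Ioc hs n).2]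
        · exact div_nonneg (neg_nonneg.2 (log_nonpos ht.1.le ht.2)) hn'.le
        · exact one_sub_rpow_one_div_le ht.1 n
        · exact one_sub_rpow_one_div_le hs.1 n
    _ = log t * log s / n := by field_simp

lemma tendsto_rpow_one_div_add_sub_mul_pow {t s : ℝ} (ht : t ∈ Set.Ioc (0 : ℝ) 1)
    (hs : s ∈ Set.Ioc (0 : ℝ) 1) :
    Tendsto (fun n : ℕ => (t ^ ((1 : ℝ) / n) + s ^ ((1 : ℝ) / n)
      - t ^ ((1 : ℝ) / n) * s ^ ((1 : ℝ) / n)) ^ n) atTop (𝓝 1) := by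
  have ha := rpow_one_div_mem_Ioc ht
  have hb := rpow_one_div_mem_Ioc hs
  refine (tendsto_one_sub_pow_of_tendsto_natCast_mul (fun n => ?_) (fun n => ?_)
    (tendsto_natCast_mul_one_sub_rpow_mul_one_sub_rpow ht hs)).congr fun n => by ring
  · exact mul_nonneg (sub_nonneg.2 (ha n).2) (sub_nonneg.2 (hb n).2)
  · exact mul_le_one₀ (by linarith [(ha n).1]) (sub_nonneg.2 (hb n).2) (by linarith [(hb n).1])

/-- If the underlying copula is the Gumbel logistic copula `C(u,v) = uv/(u+v-uv)`, then the
copula of the componentwise maxima of an i.i.d. sample of size `n`, namely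
`C_{n:n}(t,s) = C(t^{1/n}, s^{1/n})^n`, equals `ts/(t^{1/n}+s^{1/n}-t^{1/n}s^{1/n})^n`, and
for each fixed `(t,s) ∈ (0,1]²`, `lim_{n→∞} C_{n:n}(t,s) = ts`. -/
theorem gumbel_maxima_copula (C : ℝ → ℝ → ℝ)
    (hC : ∀ u v, C u v = u * v / (u + v - u * v))
    (t s : ℝ) (ht : t ∈ Set.Ioc (0:ℝ) 1) (hs : s ∈ Set.Ioc (0:ℝ) 1) :
    (∀ n : ℕ, 1 ≤ n →
      (C (t ^ ((1 : ℝ) / n)) (s ^ ((1 : ℝ) / n))) ^ n =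
        t * s / (t ^ ((1 : ℝ) / n) + s ^ ((1 : ℝ) / n)
          - t ^ ((1 : ℝ) / n) * s ^ ((1 : ℝ) / n)) ^ n) ∧
    Tendsto (fun n : ℕ => (C (t ^ ((1 : ℝ) / n)) (s ^ ((1 : ℝ) / n))) ^ n)
      atTop (nhds (t * s)) := by
  have closed_form : ∀ n : ℕ, 1 ≤ n →
      (C (t ^ ((1 : ℝ) / n)) (s ^ ((1 : ℝ) / n))) ^ n =
        t * s / (t ^ ((1 : ℝ) / n) + s ^ ((1 : ℝ) / n)
          - t ^ ((1 : ℝ) / n) * s ^ ((1 : ℝ) / n)) ^ n := fun n hn => by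
    rw [hC, div_pow, mul_pow, rpow_one_div_natCast_pow ht.1.le (by omega),
      rpow_one_div_natCast_pow hs.1.le (by omega)]
  refine ⟨closed_form, ?_⟩
  have hlim : Tendsto (fun n : ℕ => t * s / (t ^ ((1 : ℝ) / n) + s ^ ((1 : ℝ) / n)
      - t ^ ((1 : ℝ) / n) * s ^ ((1 : ℝ) / n)) ^ n) atTop (𝓝 (t * s / 1)) :=
    tendsto_const_nhds.div (tendsto_rpow_one_div_add_sub_mul_pow ht hs) one_ne_zero
  rw [div_one] at hlim
  exact hlim.congr' ((eventually_ge_atTop 1).mono fun n hn => (closed_form n hn).symm)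
end

section
/- With the notation of the multinomial formula for P(U_{r:n} ≤ u, V_{r:n} ≤ v) (the r = s case), the sum decomposes as: P(U_{r:n} ≤ u, V_{r:n} ≤ v) = Σ_{i=r}^n binom(n,i) C^i (v - C + C̄)^{n-i} + Σ_{j=r}^n binom(n,j) C^j (u - C + C̄)^{n-j} - Σ_{i=r}^n binom(n,i) C^i C̄^{n-i} + Σ_{i=r}^n Σ_{j=r}^n Σ_{k ≠ i, k ≠ j} c(n,k;i,j) C^k (u-C)^{i-k} (v-C)^{j-k} C̄^{n-i-j+k}, where C = C(u,v), C̄ = 1 - u - v + C(u,v), and c(n,k;i,j) = n!/(k!(i-k)!(j-k)!(n-i-j+k)!). -/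
/-!
Besides the terms with `k ≠ i` and `k ≠ j`, the inner sum over `k` contributes only `k = min i j`.
Split the pairs `(i, j)` into `i ≤ j` and `j ≤ i`, which overlap on the diagonal. For `i ≤ j` the
term at `k = i` is `binom(n,i) C^i · binom(n-i,j-i) (v-C)^(j-i) C̄^(n-j)`, whose sum over `j ≥ i`
is `binom(n,i) C^i (v - C + C̄)^(n-i)` by the binomial theorem; symmetrically for `j ≤ i`, and the
diagonal contributes `binom(n,i) C^i C̄^(n-i)`.
-/

/-- The multinomial coefficient `c(n,k;i,j) = n!/(k!(i-k)!(j-k)!(n-i-j+k)!)` as a real. -/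
noncomputable def multinomCoef (n k i j : ℕ) : ℝ :=
  (n.factorial : ℝ) /
    ((k.factorial : ℝ) * ((i - k).factorial : ℝ) * ((j - k).factorial : ℝ) *
      ((n + k - i - j).factorial : ℝ))

open Finset

theorem Finset.sum_sum_eq_sum_sum_le_add_sum_sum_le_sub_sum {α M : Type*} [LinearOrder α]
    [AddCommGroup M] (s : Finset α) (g : α → α → M) :
    ∑ i ∈ s, ∑ j ∈ s, g i j =
      ∑ i ∈ s, ∑ j ∈ s with i ≤ j, g i j + ∑ j ∈ s, ∑ i ∈ s with j ≤ i, g i j -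
        ∑ i ∈ s, g i i := by
  have hrow : ∀ i, ∑ j ∈ s, g i j = ∑ j ∈ s with i ≤ j, g i j + ∑ j ∈ s with j ≤ i, g i j -
      ∑ j ∈ s, if i = j then g i j else 0 := by
    intro i
    rw [sum_filter, sum_filter, ← sum_add_distrib, ← sum_sub_distrib]
    refine sum_congr rfl fun j _ => ?_
    rcases lt_trichotomy i j with h | rfl | h
    · simp [h.le, h.not_ge, h.ne]
    · simp
    · simp [h.le, h.not_ge, h.ne']
  have hswap : ∑ i ∈ s, ∑ j ∈ s with j ≤ i, g i j = ∑ j ∈ s, ∑ i ∈ s with j ≤ i, g i j :=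
    sum_comm' fun i j => by simp only [mem_filter]; tauto
  rw [sum_congr rfl fun i _ => hrow i, sum_sub_distrib, sum_add_distrib, hswap]
  simp only [sum_ite_eq, sum_ite_mem, inter_self]

theorem sum_Icc_choose_mul_pow_mul_pow {R : Type*} [CommSemiring R] {i n : ℕ} (hin : i ≤ n)
    (x y : R) :
    ∑ j ∈ Icc i n, ((n - i).choose (j - i) : R) * x ^ (j - i) * y ^ (n - j) =
      (x + y) ^ (n - i) := by
  rw [← Ico_add_one_right_eq_Icc, sum_Ico_eq_sum_range, show n + 1 - i = n - i + 1 by omega,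
    add_pow]
  refine sum_congr rfl fun m _ => ?_
  rw [Nat.add_sub_cancel_left, show n - (i + m) = n - i - m by omega]
  ring

theorem multinomCoef_comm (n k i j : ℕ) : multinomCoef n k i j = multinomCoef n k j i := by
  simp only [multinomCoef, Nat.sub_right_comm (n + k) i j]
  ring

theorem multinomCoef_self_left {n i j : ℕ} (hij : i ≤ j) (hjn : j ≤ n) :
    multinomCoef n i i j = n.choose i * (n - i).choose (j - i) := by
  have hn := Nat.choose_mul_factorial_mul_factorial (hij.trans hjn)
  have hni := Nat.choose_mul_factorial_mul_factorial (Nat.sub_le_sub_right hjn i)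
  rw [Nat.sub_sub_sub_cancel_right hij] at hni
  rw [multinomCoef, Nat.sub_self, Nat.factorial_zero, Nat.add_sub_cancel, ← hn, ← hni]
  push_cast
  field_simp

theorem sum_Icc_min_eq_sum_filter_add {M : Type*} [AddCommMonoid M] {a i j : ℕ}
    (ha : a ≤ min i j) (f : ℕ → M) :
    ∑ k ∈ Icc a (min i j), f k =
      ∑ k ∈ Icc a (min i j) with k ≠ i ∧ k ≠ j, f k + f (min i j) := by
  rw [← sum_filter_add_sum_filter_not _ (fun k => k ≠ i ∧ k ≠ j)]
  congr 1
  rw [show (Icc a (min i j)).filter (fun k => ¬(k ≠ i ∧ k ≠ j)) = {min i j} by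
      ext k; simp only [mem_filter, mem_Icc, mem_singleton]; omega,
    sum_singleton]

/-- The summand `c(n,k;i,j) C^k (u-C)^(i-k) (v-C)^(j-k) C̄^(n-i-j+k)`, with `x = u - C`,
`y = v - C` and `d = C̄`. -/
noncomputable def multinomTerm (n : ℕ) (c x y d : ℝ) (i j k : ℕ) : ℝ :=
  multinomCoef n k i j * c ^ k * x ^ (i - k) * y ^ (j - k) * d ^ (n + k - i - j)

section multinomTerm

variable {n : ℕ} {c x y d : ℝ}

theorem multinomTerm_comm (i j k : ℕ) :
    multinomTerm n c x y d i j k = multinomTerm n c y x d j i k := by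
  simp only [multinomTerm, multinomCoef_comm n k i j, Nat.sub_right_comm (n + k) i j]
  ring

theorem multinomTerm_self_left {i j : ℕ} (hij : i ≤ j) (hjn : j ≤ n) :
    multinomTerm n c x y d i j i =
      n.choose i * c ^ i * ((n - i).choose (j - i) * y ^ (j - i) * d ^ (n - j)) := by
  rw [multinomTerm, multinomCoef_self_left hij hjn, Nat.sub_self, Nat.add_sub_cancel]
  ring

theorem multinomTerm_self (i : ℕ) (hin : i ≤ n) :
    multinomTerm n c x y d i i i = n.choose i * c ^ i * d ^ (n - i) := by
  simp [multinomTerm_self_left le_rfl hin]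

theorem sum_multinomTerm_min_of_le {r i : ℕ} (hri : r ≤ i) (hin : i ≤ n) :
    ∑ j ∈ Icc r n with i ≤ j, multinomTerm n c x y d i j (min i j) =
      n.choose i * c ^ i * (y + d) ^ (n - i) := by
  rw [show (Icc r n).filter (i ≤ ·) = Icc i n by ext j; simp only [mem_filter, mem_Icc]; omega,
    ← sum_Icc_choose_mul_pow_mul_pow hin, mul_sum]
  refine sum_congr rfl fun j hj => ?_
  rw [min_eq_left (mem_Icc.1 hj).1, multinomTerm_self_left (mem_Icc.1 hj).1 (mem_Icc.1 hj).2]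

end multinomTerm

theorem multinomial_sum_decomposition_general (n r : ℕ)
    (u v Cuv : ℝ) (Cb : ℝ) :
    ∑ i ∈ Finset.Icc r n, ∑ j ∈ Finset.Icc r n, ∑ k ∈ Finset.Icc (i + j - n) (min i j),
        multinomCoef n k i j * Cuv ^ k * (u - Cuv) ^ (i - k) * (v - Cuv) ^ (j - k) *
          Cb ^ (n + k - i - j) =
      (∑ i ∈ Finset.Icc r n, (n.choose i : ℝ) * Cuv ^ i * (v - Cuv + Cb) ^ (n - i)) +
      (∑ j ∈ Finset.Icc r n, (n.choose j : ℝ) * Cuv ^ j * (u - Cuv + Cb) ^ (n - j)) -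
      (∑ i ∈ Finset.Icc r n, (n.choose i : ℝ) * Cuv ^ i * Cb ^ (n - i)) +
      ∑ i ∈ Finset.Icc r n, ∑ j ∈ Finset.Icc r n,
        ∑ k ∈ (Finset.Icc (i + j - n) (min i j)).filter (fun k => k ≠ i ∧ k ≠ j),
          multinomCoef n k i j * Cuv ^ k * (u - Cuv) ^ (i - k) * (v - Cuv) ^ (j - k) *
            Cb ^ (n + k - i - j) := by
  set T := multinomTerm n Cuv (u - Cuv) (v - Cuv) Cb
  change ∑ i ∈ Icc r n, ∑ j ∈ Icc r n, ∑ k ∈ _, T i j k =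
    _ + ∑ i ∈ Icc r n, ∑ j ∈ Icc r n, ∑ k ∈ _, T i j k
  have hsplit : ∀ i ∈ Icc r n, ∀ j ∈ Icc r n,
      ∑ k ∈ Icc (i + j - n) (min i j), T i j k =
        ∑ k ∈ Icc (i + j - n) (min i j) with k ≠ i ∧ k ≠ j, T i j k + T i j (min i j) :=
    fun i hi j hj => sum_Icc_min_eq_sum_filter_add (by simp only [mem_Icc] at hi hj; omega) _
  rw [sum_congr rfl fun i hi => sum_congr rfl (hsplit i hi)]
  simp only [sum_add_distrib]
  rw [add_comm, sum_sum_eq_sum_sum_le_add_sum_sum_le_sub_sum]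
  congr 2
  · congr 1
    · refine sum_congr rfl fun i hi => ?_
      exact sum_multinomTerm_min_of_le (mem_Icc.1 hi).1 (mem_Icc.1 hi).2
    · refine sum_congr rfl fun j hj => ?_
      simp only [T, multinomTerm_comm _ j, min_comm _ j]
      exact sum_multinomTerm_min_of_le (mem_Icc.1 hj).1 (mem_Icc.1 hj).2
  · refine sum_congr rfl fun i hi => ?_
    rw [min_self]
    exact multinomTerm_self i (mem_Icc.1 hi).2

/-- Lemma 1 of the paper: the multinomial sum for `P(U_{r:n} ≤ u, V_{r:n} ≤ v)` (case `r = s`)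
decomposes, with `C = C(u,v)` and `C̄ = 1 - u - v + C`, as the sum of the three binomial
parts and the off-diagonal remainder (`k ≠ i`, `k ≠ j`). -/
theorem multinomial_sum_decomposition (n r : ℕ) (hr : 1 ≤ r) (hrn : r ≤ n)
    (u v Cuv : ℝ) (Cb : ℝ) (hCb : Cb = 1 - u - v + Cuv) :
    ∑ i ∈ Finset.Icc r n, ∑ j ∈ Finset.Icc r n, ∑ k ∈ Finset.Icc (i + j - n) (min i j),
        multinomCoef n k i j * Cuv ^ k * (u - Cuv) ^ (i - k) * (v - Cuv) ^ (j - k) *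
          Cb ^ (n + k - i - j) =
      (∑ i ∈ Finset.Icc r n, (n.choose i : ℝ) * Cuv ^ i * (v - Cuv + Cb) ^ (n - i)) +
      (∑ j ∈ Finset.Icc r n, (n.choose j : ℝ) * Cuv ^ j * (u - Cuv + Cb) ^ (n - j)) -
      (∑ i ∈ Finset.Icc r n, (n.choose i : ℝ) * Cuv ^ i * Cb ^ (n - i)) +
      ∑ i ∈ Finset.Icc r n, ∑ j ∈ Finset.Icc r n,
        ∑ k ∈ (Finset.Icc (i + j - n) (min i j)).filter (fun k => k ≠ i ∧ k ≠ j),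
          multinomCoef n k i j * Cuv ^ k * (u - Cuv) ^ (i - k) * (v - Cuv) ^ (j - k) *
            Cb ^ (n + k - i - j) :=
  multinomial_sum_decomposition_general n r u v Cuv Cb
end
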